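/- For every $n\in\mathbb N$, the restriction map $r_n|_{M_n}$ is injective, its image is $r_n(M_n)=f(s_n B_{\ell_\infty(\Gamma_n)})$, and the inverse map $(r_n|_{M_n})^{-1}:f(s_n B_{\ell_\infty(\Gamma_n)})\to M_n$ is $(3\lambda+2)$-Lipschitz. -/

import Mathlib

open Set

noncomputable section

variable {Γ : Type*} [TopologicalSpace Γ] [DiscreteTopology Γ]

/-- `ℓ∞(Γ)`: the Banach space of bounded real functions on `Γ`
(carrying the discrete topology, so that boundedness is the only constraint). -/
abbrev Linf (Γ : Type*) [TopologicalSpace Γ] [DiscreteTopology Γ] : Type _ :=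
  BoundedContinuousFunction Γ ℝ

/-- The entire part of a real number, toward `0`: `[r] = sign(r)⌊|r|⌋`. -/
def ent (r : ℝ) : ℝ := Real.sign r * ⌊|r|⌋

lemma abs_ent_le (r : ℝ) : |ent r| ≤ |r| := by
  have hsign : |Real.sign r| ≤ 1 := by
    rcases lt_trichotomy r 0 with h | h | h
    · rw [Real.sign_of_neg h]; norm_num
    · rw [h, Real.sign_zero]; norm_num
    · rw [Real.sign_of_pos h]; norm_num
  have hfl : |(⌊|r|⌋ : ℝ)| ≤ |r| := by
    rw [abs_of_nonneg (by exact_mod_cast Int.floor_nonneg.mpr (abs_nonneg r))]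
    exact Int.floor_le _
  calc |ent r| = |Real.sign r| * |(⌊|r|⌋ : ℝ)| := abs_mul _ _
    _ ≤ 1 * |r| := mul_le_mul hsign hfl (abs_nonneg _) zero_le_one
    _ = |r| := one_mul _

/-- The coordinatewise quantization `f : ℓ∞(S) → ℓ∞(S)`, `f(x)(γ) = [x(γ)]`. -/
def quant (x : Linf Γ) : Linf Γ :=
  BoundedContinuousFunction.ofNormedAddCommGroup (fun γ => ent (x γ))
    continuous_of_discreteTopology ‖x‖ (fun γ => by
      rw [Real.norm_eq_abs]
      exact (abs_ent_le (x γ)).trans (by simpa using x.norm_coe_le_norm γ))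

/-- Scalar truncation at level `s`. -/
def truncFun (s t : ℝ) : ℝ := if |t| ≤ s then t else s * t / |t|

lemma abs_truncFun_le (s t : ℝ) : |truncFun s t| ≤ max |s| |t| := by
  unfold truncFun
  split_ifs with h
  · exact le_max_right _ _
  · by_cases ht : t = 0
    · simp [ht]
    · have hst : abs (s * t / |t|) = |s| := by
        rw [abs_div, abs_mul, abs_abs, mul_div_assoc, div_self (abs_ne_zero.mpr ht), mul_one]
      rw [hst]; exact le_max_left _ _

/-- The truncation of radius `s`: `T_s(x)(γ) = x(γ)` if `|x(γ)| ≤ s`,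
and `= s·x(γ)/|x(γ)|` otherwise. -/
def trunc (s : ℝ) (x : Linf Γ) : Linf Γ :=
  BoundedContinuousFunction.ofNormedAddCommGroup (fun γ => truncFun s (x γ))
    continuous_of_discreteTopology (max |s| ‖x‖) (fun γ => by
      rw [Real.norm_eq_abs]
      exact (abs_truncFun_le s (x γ)).trans
        (max_le_max le_rfl (by simpa using x.norm_coe_le_norm γ)))

/-- The restriction operator `r_S : ℓ∞(Γ) → ℓ∞(S)`, where `ℓ∞(S)` is identified
isometrically with the subspace of `ℓ∞(Γ)` of functions vanishing off `S`. -/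
def restr (S : Set Γ) (x : Linf Γ) : Linf Γ :=
  BoundedContinuousFunction.ofNormedAddCommGroup (S.indicator x)
    continuous_of_discreteTopology ‖x‖ (fun γ => by
      rw [Real.norm_eq_abs]
      by_cases h : γ ∈ S
      · rw [Set.indicator_of_mem h]
        simpa using x.norm_coe_le_norm γ
      · rw [Set.indicator_of_notMem h]
        simp)

/-- The ball `s·B_{ℓ∞(S)}`, viewed inside `ℓ∞(Γ)`: functions supported on `S`
of norm at most `s`. -/
def suppBall (S : Set Γ) (s : ℝ) : Set (Linf Γ) :=
  {x | (∀ γ ∉ S, x γ = 0) ∧ ‖x‖ ≤ s}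

/-- `chain T a b = T (a+1) ∘ ⋯ ∘ T b` (the identity if `b ≤ a`). -/
def chain {α : Type*} (T : ℕ → α → α) (a b : ℕ) : α → α :=
  Nat.rec id (fun k ih => ih ∘ T (a + k + 1)) (b - a)

/-- Bourgain–Delbaen data on `Γ`: a strictly increasing sequence of nonempty finite
sets `Γs n` (for `n ≥ 1`) with union `Γ`, together with compatible bounded linear
extension operators `i n : ℓ∞(Γ_n) → ℓ∞(Γ)` (realized as operators on `ℓ∞(Γ)`
factoring through the restriction `restr (Γs n)`), with norms bounded by the
positive integer `lam`. -/
structure BD (Γ : Type*) [TopologicalSpace Γ] [DiscreteTopology Γ] where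
  Γs : ℕ → Set Γ
  lam : ℕ
  i : ℕ → Linf Γ →L[ℝ] Linf Γ
  one_le_lam : 1 ≤ lam
  finite : ∀ n, 1 ≤ n → (Γs n).Finite
  nonempty : ∀ n, 1 ≤ n → (Γs n).Nonempty
  ssubset : ∀ n, 1 ≤ n → Γs n ⊂ Γs (n + 1)
  iUnion_eq : ⋃ n ∈ {k : ℕ | 1 ≤ k}, Γs n = Set.univ
  extension : ∀ n, 1 ≤ n → ∀ x : Linf Γ, ∀ γ ∈ Γs n, i n x γ = x γ
  factor : ∀ n, 1 ≤ n → ∀ x : Linf Γ, i n (restr (Γs n) x) = i n x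
  compatible : ∀ n m, 1 ≤ n → n < m → ∀ x : Linf Γ, i m (restr (Γs m) (i n x)) = i n x
  norm_i_le : ∀ n, 1 ≤ n → ‖i n‖ ≤ (lam : ℝ)

namespace BD

/-- `s n = λ^n`. -/
def s (B : BD Γ) (n : ℕ) : ℝ := (B.lam : ℝ) ^ n

/-- The sets `M_n` (with `M_0 = ∅`):
`M_n = M_{n-1} ∪ (f ∘ i_n)(f(s_n B_{ℓ∞(Γ_n)}) \ r_n(M_{n-1}))`. -/
def M (B : BD Γ) : ℕ → Set (Linf Γ)
  | 0 => ∅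
  | n + 1 =>
      M B n ∪
        (fun z => quant (B.i (n + 1) z)) ''
          (quant '' suppBall (B.Γs (n + 1)) (B.s (n + 1)) \ restr (B.Γs (n + 1)) '' M B n)

/-- `M = ⋃ n, M_n`. -/
def Mtot (B : BD Γ) : Set (Linf Γ) := ⋃ n, B.M n

/-- `C_n = (f ∘ i_{n+1} ∘ f ∘ T_{s_{n+1}} ∘ r_{n+1} ∘ i_n)
(f(s_{n+1}B_{ℓ∞(Γ_n)}) \ f(s_n B_{ℓ∞(Γ_n)}))`. -/
def C (B : BD Γ) (n : ℕ) : Set (Linf Γ) :=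
  (fun z => quant (B.i (n + 1) (quant (trunc (B.s (n + 1)) (restr (B.Γs (n + 1)) (B.i n z)))))) ''
    (quant '' suppBall (B.Γs n) (B.s (n + 1)) \ quant '' suppBall (B.Γs n) (B.s n))

/-- `D_n = M_n ∪ C_n`. -/
def D (B : BD Γ) (n : ℕ) : Set (Linf Γ) := B.M n ∪ B.C n

end BD

/-! By induction on `n`. An element of `M_{n+1}` is either already in `M_n` or new, of the form
`f(i_{n+1} z)` with `z` integer valued, and then `r_{n+1}` recovers `z` because `i_{n+1}` is an
extension and `f` fixes integers. Quantization is a coarse Lipschitz map,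
`‖f u - f v‖ ≤ ‖u - v‖ + 1`, and distinct integer-valued vectors are at distance at least `1`,
which absorbs the additive error. For an old point `x = f(i_k y)`, compatibility gives
`i_{n+1} r_{n+1} i_k y = i_k y`, so `x` is within `λ + 1` of `f(i_{n+1}(r_{n+1} x))`; comparing `x`
with a new point `f(i_{n+1} z')` through it costs `(λ + 1) + (λ d + 1) ≤ (3λ + 2) d`, where
`d = ‖r_{n+1} x - z'‖ ≥ 1`. Injectivity is the case `d = 0` of the Lipschitz bound. -/

section Ent

lemma ent_zero : ent 0 = 0 := by simp [ent]

lemma ent_neg (r : ℝ) : ent (-r) = -ent r := by simp [ent, Real.sign_neg]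

lemma ent_of_nonneg {r : ℝ} (hr : 0 ≤ r) : ent r = ⌊r⌋ := by
  rcases hr.eq_or_lt with rfl | hr
  · simp [ent]
  · rw [ent, Real.sign_of_pos hr, abs_of_pos hr, one_mul]

lemma ent_intCast (m : ℤ) : ent m = m := by
  rcases le_total 0 m with hm | hm
  · rw [ent_of_nonneg (by exact_mod_cast hm), Int.floor_intCast]
  · have := ent_of_nonneg (r := ((-m : ℤ) : ℝ)) (by exact_mod_cast neg_nonneg.mpr hm)
    rw [Int.floor_intCast, Int.cast_neg, ent_neg] at this
    linarith

lemma exists_intCast_eq_ent (r : ℝ) : ∃ m : ℤ, (m : ℝ) = ent r := by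
  rcases le_total 0 r with hr | hr
  · exact ⟨⌊r⌋, (ent_of_nonneg hr).symm⟩
  · refine ⟨-⌊-r⌋, ?_⟩
    rw [Int.cast_neg, ← ent_of_nonneg (neg_nonneg.mpr hr), ent_neg, neg_neg]

lemma ent_bounds_of_nonneg {r : ℝ} (hr : 0 ≤ r) : 0 ≤ ent r ∧ ent r ≤ r ∧ r < ent r + 1 := by
  rw [ent_of_nonneg hr]
  exact ⟨by exact_mod_cast Int.floor_nonneg.mpr hr, Int.floor_le r, Int.lt_floor_add_one r⟩

lemma ent_bounds_of_nonpos {r : ℝ} (hr : r ≤ 0) : ent r ≤ 0 ∧ r ≤ ent r ∧ ent r - 1 < r := by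
  obtain ⟨h₀, h₁, h₂⟩ := ent_bounds_of_nonneg (neg_nonneg.mpr hr)
  rw [ent_neg] at h₀ h₁ h₂
  exact ⟨by linarith, by linarith, by linarith⟩

lemma abs_ent_sub_self_lt (r : ℝ) : |ent r - r| < 1 := by
  rw [abs_sub_lt_iff]
  rcases le_total 0 r with hr | hr
  · have := ent_bounds_of_nonneg hr
    constructor <;> linarith
  · have := ent_bounds_of_nonpos hr
    constructor <;> linarith

lemma ent_sub_ent_lt (a b : ℝ) : ent a - ent b < |a - b| + 1 := by
  have hab := le_abs_self (a - b)
  have hab₀ := abs_nonneg (a - b)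
  rcases le_total 0 a with ha | ha <;> rcases le_total 0 b with hb | hb
  · have := ent_bounds_of_nonneg ha; have := ent_bounds_of_nonneg hb; linarith
  · have := ent_bounds_of_nonneg ha; have := ent_bounds_of_nonpos hb; linarith
  · have := ent_bounds_of_nonpos ha; have := ent_bounds_of_nonneg hb; linarith
  · have := ent_bounds_of_nonpos ha; have := ent_bounds_of_nonpos hb; linarith

lemma abs_ent_sub_ent_lt (a b : ℝ) : |ent a - ent b| < |a - b| + 1 :=
  abs_sub_lt_iff.mpr ⟨ent_sub_ent_lt a b, abs_sub_comm a b ▸ ent_sub_ent_lt b a⟩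

end Ent

namespace Linf

lemma norm_le_iff {x : Linf Γ} {c : ℝ} (hc : 0 ≤ c) : ‖x‖ ≤ c ↔ ∀ γ, |x γ| ≤ c :=
  BoundedContinuousFunction.norm_le hc

lemma abs_apply_le_norm (x : Linf Γ) (γ : Γ) : |x γ| ≤ ‖x‖ :=
  x.norm_coe_le_norm γ

end Linf

section Restr

@[simp]
lemma coe_restr (S : Set Γ) (x : Linf Γ) : ⇑(restr S x) = S.indicator x := rfl

lemma restr_sub (S : Set Γ) (x y : Linf Γ) : restr S (x - y) = restr S x - restr S y := by
  ext γ
  exact congrFun (Set.indicator_sub' S x y) γ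

lemma norm_restr_le (S : Set Γ) (x : Linf Γ) : ‖restr S x‖ ≤ ‖x‖ :=
  (Linf.norm_le_iff (norm_nonneg x)).mpr fun γ =>
    norm_indicator_le_norm_self (s := S) x γ |>.trans (x.norm_coe_le_norm γ)

lemma restr_restr {S T : Set Γ} (h : S ⊆ T) (x : Linf Γ) :
    restr S (restr T x) = restr S x := by
  ext γ
  simp [Set.indicator_indicator, Set.inter_eq_left.mpr h]

lemma norm_restr_sub_le_of_subset {S T : Set Γ} (h : S ⊆ T) (x y : Linf Γ) :
    ‖restr S x - restr S y‖ ≤ ‖restr T x - restr T y‖ := by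
  rw [← restr_sub, ← restr_sub, ← restr_restr h]
  exact norm_restr_le _ _

end Restr

section Quant

@[simp]
lemma quant_apply (x : Linf Γ) (γ : Γ) : quant x γ = ent (x γ) := rfl

lemma norm_quant_le (x : Linf Γ) : ‖quant x‖ ≤ ‖x‖ :=
  (Linf.norm_le_iff (norm_nonneg x)).mpr fun γ =>
    (abs_ent_le (x γ)).trans (Linf.abs_apply_le_norm x γ)

lemma norm_quant_sub_self_le (x : Linf Γ) : ‖quant x - x‖ ≤ 1 :=
  (Linf.norm_le_iff zero_le_one).mpr fun γ => (abs_ent_sub_self_lt (x γ)).le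

lemma norm_quant_sub_quant_le (x y : Linf Γ) : ‖quant x - quant y‖ ≤ ‖x - y‖ + 1 :=
  (Linf.norm_le_iff (by positivity)).mpr fun γ =>
    (abs_ent_sub_ent_lt (x γ) (y γ)).le.trans
      (add_le_add_left (Linf.abs_apply_le_norm (x - y) γ) 1)

end Quant

section IntValued

def IsIntValued (x : Linf Γ) : Prop := ∀ γ, ∃ m : ℤ, (m : ℝ) = x γ

lemma isIntValued_quant (x : Linf Γ) : IsIntValued (quant x) :=
  fun γ => exists_intCast_eq_ent (x γ)

namespace IsIntValued

variable {x y : Linf Γ}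

lemma sub (hx : IsIntValued x) (hy : IsIntValued y) : IsIntValued (x - y) := fun γ => by
  obtain ⟨m, hm⟩ := hx γ
  obtain ⟨k, hk⟩ := hy γ
  exact ⟨m - k, by simp [hm, hk]⟩

lemma restr (S : Set Γ) (hx : IsIntValued x) : IsIntValued (restr S x) := fun γ => by
  by_cases hγ : γ ∈ S
  · simpa [hγ] using hx γ
  · exact ⟨0, by simp [hγ]⟩

lemma quant_eq (hx : IsIntValued x) : quant x = x := by
  ext γ
  obtain ⟨m, hm⟩ := hx γ
  rw [quant_apply, ← hm, ent_intCast]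

lemma one_le_norm (hx : IsIntValued x) (h : x ≠ 0) : 1 ≤ ‖x‖ := by
  obtain ⟨γ, hγ⟩ : ∃ γ, x γ ≠ 0 := by
    by_contra! h'
    exact h (BoundedContinuousFunction.ext h')
  obtain ⟨m, hm⟩ := hx γ
  have hm0 : m ≠ 0 := by rintro rfl; exact hγ (by simp [← hm])
  calc (1 : ℝ) ≤ |(m : ℝ)| := by exact_mod_cast Int.one_le_abs hm0
    _ ≤ ‖x‖ := hm ▸ Linf.abs_apply_le_norm x γ

lemma one_le_norm_sub (hx : IsIntValued x) (hy : IsIntValued y) (h : x ≠ y) :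
    1 ≤ ‖x - y‖ :=
  (hx.sub hy).one_le_norm (sub_ne_zero.mpr h)

end IsIntValued

lemma mem_quant_image_suppBall {S : Set Γ} {s : ℝ} {x : Linf Γ} :
    x ∈ quant '' suppBall S s ↔ IsIntValued x ∧ (∀ γ ∉ S, x γ = 0) ∧ ‖x‖ ≤ s := by
  constructor
  · rintro ⟨w, ⟨hw₀, hws⟩, rfl⟩
    exact ⟨isIntValued_quant w, fun γ hγ => by simp [hw₀ γ hγ, ent_zero],
      (norm_quant_le w).trans hws⟩
  · rintro ⟨hint, h₀, hs⟩
    exact ⟨x, ⟨h₀, hs⟩, hint.quant_eq⟩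

end IntValued

namespace BD

variable (B : BD Γ)

lemma one_le_lam_real : (1 : ℝ) ≤ B.lam := by exact_mod_cast B.one_le_lam

lemma s_succ (n : ℕ) : B.s (n + 1) = B.lam * B.s n := by
  rw [s, s, pow_succ, mul_comm]

lemma s_mono {n m : ℕ} (h : n ≤ m) : B.s n ≤ B.s m :=
  pow_le_pow_right₀ B.one_le_lam_real h

lemma norm_i_apply_le {n : ℕ} (hn : 1 ≤ n) (u : Linf Γ) : ‖B.i n u‖ ≤ B.lam * ‖u‖ :=
  ((B.i n).le_opNorm u).trans (mul_le_mul_of_nonneg_right (B.norm_i_le n hn) (norm_nonneg u))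

lemma norm_quant_i_sub_le {n : ℕ} (hn : 1 ≤ n) (z z' : Linf Γ) :
    ‖quant (B.i n z) - quant (B.i n z')‖ ≤ B.lam * ‖z - z'‖ + 1 := by
  calc ‖quant (B.i n z) - quant (B.i n z')‖ ≤ ‖B.i n (z - z')‖ + 1 := by
        simpa only [map_sub] using norm_quant_sub_quant_le (B.i n z) (B.i n z')
    _ ≤ B.lam * ‖z - z'‖ + 1 := by gcongr; exact B.norm_i_apply_le hn _

lemma restr_quant_i {n : ℕ} (hn : 1 ≤ n) {s : ℝ} {z : Linf Γ}
    (hz : z ∈ quant '' suppBall (B.Γs n) s) : restr (B.Γs n) (quant (B.i n z)) = z := by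
  obtain ⟨hint, hz₀, -⟩ := mem_quant_image_suppBall.mp hz
  ext γ
  by_cases hγ : γ ∈ B.Γs n
  · simp only [coe_restr, Set.indicator_of_mem hγ, quant_apply, B.extension n hn z γ hγ]
    rw [← quant_apply, hint.quant_eq]
  · simp [hγ, hz₀ γ hγ]

lemma exists_eq_quant_i_of_mem_M {n : ℕ} {x : Linf Γ} (hx : x ∈ B.M n) :
    ∃ k, 1 ≤ k ∧ k ≤ n ∧ ∃ y ∈ quant '' suppBall (B.Γs k) (B.s k), x = quant (B.i k y) := by
  induction n with
  | zero => simp [M] at hx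
  | succ n ih =>
    rcases hx with hx | ⟨y, ⟨hy, -⟩, rfl⟩
    · obtain ⟨k, hk₁, hkn, hk⟩ := ih hx
      exact ⟨k, hk₁, hkn.trans n.le_succ, hk⟩
    · exact ⟨n + 1, n.succ_pos, le_rfl, y, hy, rfl⟩

lemma one_le_of_mem_M {n : ℕ} {x : Linf Γ} (hx : x ∈ B.M n) : 1 ≤ n := by
  obtain ⟨k, hk₁, hkn, -⟩ := B.exists_eq_quant_i_of_mem_M hx
  exact hk₁.trans hkn

lemma isIntValued_of_mem_M {n : ℕ} {x : Linf Γ} (hx : x ∈ B.M n) : IsIntValued x := by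
  obtain ⟨k, -, -, y, -, rfl⟩ := B.exists_eq_quant_i_of_mem_M hx
  exact isIntValued_quant _

lemma norm_le_of_mem_M {n : ℕ} {x : Linf Γ} (hx : x ∈ B.M n) : ‖x‖ ≤ B.s (n + 1) := by
  obtain ⟨k, hk₁, hkn, y, hy, rfl⟩ := B.exists_eq_quant_i_of_mem_M hx
  calc ‖quant (B.i k y)‖ ≤ B.lam * ‖y‖ := (norm_quant_le _).trans (B.norm_i_apply_le hk₁ y)
    _ ≤ B.lam * B.s k := by gcongr; exact (mem_quant_image_suppBall.mp hy).2.2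
    _ = B.s (k + 1) := (B.s_succ k).symm
    _ ≤ B.s (n + 1) := B.s_mono (by omega)

lemma restr_mem_of_mem_M {n : ℕ} {x : Linf Γ} (hx : x ∈ B.M n) :
    restr (B.Γs (n + 1)) x ∈ quant '' suppBall (B.Γs (n + 1)) (B.s (n + 1)) :=
  mem_quant_image_suppBall.mpr ⟨(B.isIntValued_of_mem_M hx).restr _,
    fun γ hγ => by simp [hγ], (norm_restr_le _ _).trans (B.norm_le_of_mem_M hx)⟩

lemma norm_sub_quant_i_restr_le {n m : ℕ} (hnm : n < m) {x : Linf Γ} (hx : x ∈ B.M n) :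
    ‖x - quant (B.i m (restr (B.Γs m) x))‖ ≤ B.lam + 1 := by
  obtain ⟨k, hk₁, hkn, y, -, rfl⟩ := B.exists_eq_quant_i_of_mem_M hx
  set w := B.i k y
  have hw : B.i m (restr (B.Γs m) w) = w := B.compatible k m hk₁ (by omega) y
  have hclose : ‖w - B.i m (restr (B.Γs m) (quant w))‖ ≤ B.lam :=
    calc ‖w - B.i m (restr (B.Γs m) (quant w))‖ = ‖B.i m (restr (B.Γs m) (quant w - w))‖ := by
          rw [restr_sub, map_sub, hw, norm_sub_rev]
      _ ≤ B.lam * 1 := by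
          refine (B.norm_i_apply_le (by omega) _).trans ?_
          gcongr
          exact (norm_restr_le _ _).trans (norm_quant_sub_self_le w)
      _ = B.lam := mul_one _
  linarith [norm_quant_sub_quant_le w (B.i m (restr (B.Γs m) (quant w)))]

lemma norm_sub_quant_i_le_of_mem_M {n : ℕ} {x z : Linf Γ} (hx : x ∈ B.M n)
    (hz : z ∈ quant '' suppBall (B.Γs (n + 1)) (B.s (n + 1)) \ restr (B.Γs (n + 1)) '' B.M n) :
    ‖x - quant (B.i (n + 1) z)‖ ≤
      (3 * B.lam + 2) *
        ‖restr (B.Γs (n + 1)) x - restr (B.Γs (n + 1)) (quant (B.i (n + 1) z))‖ := by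
  obtain ⟨hzQ, hzM⟩ := hz
  rw [B.restr_quant_i n.succ_pos hzQ]
  set z₀ := restr (B.Γs (n + 1)) x
  have hsep : 1 ≤ ‖z₀ - z‖ := ((B.isIntValued_of_mem_M hx).restr _).one_le_norm_sub
    (mem_quant_image_suppBall.mp hzQ).1 fun h => hzM ⟨x, hx, h⟩
  calc ‖x - quant (B.i (n + 1) z)‖
      ≤ ‖x - quant (B.i (n + 1) z₀)‖ + ‖quant (B.i (n + 1) z₀) - quant (B.i (n + 1) z)‖ :=
        norm_sub_le_norm_sub_add_norm_sub _ _ _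
    _ ≤ (B.lam + 1) + (B.lam * ‖z₀ - z‖ + 1) :=
        add_le_add (B.norm_sub_quant_i_restr_le n.lt_succ_self hx)
          (B.norm_quant_i_sub_le n.succ_pos z₀ z)
    _ ≤ (3 * B.lam + 2) * ‖z₀ - z‖ := by nlinarith [B.one_le_lam_real]

lemma norm_quant_i_sub_quant_i_le {n : ℕ} (hn : 1 ≤ n) {s : ℝ} {z z' : Linf Γ}
    (hz : z ∈ quant '' suppBall (B.Γs n) s) (hz' : z' ∈ quant '' suppBall (B.Γs n) s) :
    ‖quant (B.i n z) - quant (B.i n z')‖ ≤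
      (3 * B.lam + 2) * ‖restr (B.Γs n) (quant (B.i n z)) - restr (B.Γs n) (quant (B.i n z'))‖ := by
  rw [B.restr_quant_i hn hz, B.restr_quant_i hn hz']
  rcases eq_or_ne z z' with rfl | hne
  · simp
  have hsep := (mem_quant_image_suppBall.mp hz).1.one_le_norm_sub
    (mem_quant_image_suppBall.mp hz').1 hne
  nlinarith [B.norm_quant_i_sub_le hn z z', B.one_le_lam_real]

lemma norm_sub_le_of_mem_M {n : ℕ} {x y : Linf Γ} (hx : x ∈ B.M n) (hy : y ∈ B.M n) :
    ‖x - y‖ ≤ (3 * B.lam + 2) * ‖restr (B.Γs n) x - restr (B.Γs n) y‖ := by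
  induction n generalizing x y with
  | zero => simp [M] at hx
  | succ n ih =>
    rcases hx with hx | ⟨z, hz, rfl⟩ <;> rcases hy with hy | ⟨z', hz', rfl⟩
    · refine (ih hx hy).trans ?_
      gcongr
      exact norm_restr_sub_le_of_subset (B.ssubset n (B.one_le_of_mem_M hx)).subset x y
    · exact B.norm_sub_quant_i_le_of_mem_M hx hz'
    · rw [norm_sub_rev, norm_sub_rev (restr _ _)]
      exact B.norm_sub_quant_i_le_of_mem_M hy hz
    · exact B.norm_quant_i_sub_quant_i_le n.succ_pos hz.1 hz'.1

lemma restr_image_M (n : ℕ) :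
    restr (B.Γs (n + 1)) '' B.M (n + 1) = quant '' suppBall (B.Γs (n + 1)) (B.s (n + 1)) := by
  refine Set.Subset.antisymm ?_ fun z hz => ?_
  · rintro _ ⟨x, hx | ⟨z, hz, rfl⟩, rfl⟩
    · exact B.restr_mem_of_mem_M hx
    · rw [B.restr_quant_i n.succ_pos hz.1]
      exact hz.1
  · by_cases hzM : z ∈ restr (B.Γs (n + 1)) '' B.M n
    · obtain ⟨x, hx, rfl⟩ := hzM
      exact ⟨x, Or.inl hx, rfl⟩
    · exact ⟨_, Or.inr ⟨z, ⟨hz, hzM⟩, rfl⟩, B.restr_quant_i n.succ_pos hz⟩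

end BD

/-- Lemma 3 (`Lipmain1`): `r_n|_{M_n}` is injective with image `f(s_n B_{ℓ∞(Γ_n)})`,
and its inverse is `(3λ+2)`-Lipschitz. -/
theorem restr_injOn_M (B : BD Γ) (n : ℕ) (hn : 1 ≤ n) :
    Set.InjOn (restr (B.Γs n)) (B.M n) ∧
    restr (B.Γs n) '' B.M n = quant '' suppBall (B.Γs n) (B.s n) ∧
    (∀ x ∈ B.M n, ∀ y ∈ B.M n,
      ‖x - y‖ ≤ (3 * (B.lam : ℝ) + 2) * ‖restr (B.Γs n) x - restr (B.Γs n) y‖) := by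
  obtain ⟨m, rfl⟩ : ∃ m, n = m + 1 := ⟨n - 1, by omega⟩
  refine ⟨fun x hx y hy hxy => ?_, B.restr_image_M m, fun x hx y hy => B.norm_sub_le_of_mem_M hx hy⟩
  have := B.norm_sub_le_of_mem_M hx hy
  rw [hxy, sub_self, norm_zero, mul_zero] at this
  exact sub_eq_zero.mp (norm_le_zero_iff.mp this)
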